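/- If f : ℝ → ℝ is 5 times continuously differentiable, then β̃_1 := (13/12)(f(x-Δx)-2f(x)+f(x+Δx))² + (f(x+Δx)-f(x))² and β̃_2 := (13/12)(f(x)-2f(x+Δx)+f(x+2Δx))² + (f(x)-f(x+Δx))² both satisfy β̃_k = f'(x)²Δx² + f'(x)f''(x)Δx³ + ((4/3)f''(x)² + (1/3)f'(x)f'''(x))Δx⁴ + O(Δx⁵). -/
import Mathlib


open Filter Asymptotics Topology
section helpers
open Set

private lemma iterWithin_eq (f : ℝ → ℝ) (hf : ContDiff ℝ 5 f) {s : Set ℝ}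
    (hs : UniqueDiffOn ℝ s) {a : ℝ} (ha : a ∈ s) {k : ℕ} (hk : k ≤ 5) :
    iteratedDerivWithin k f s a = iteratedDeriv k f a := by
  have H : HasFTaylorSeriesUpTo 5 f (ftaylorSeries ℝ f) := contDiff_iff_ftaylorSeries.mp hf
  have h2 := (H.hasFTaylorSeriesUpToOn s).eq_iteratedFDerivWithin_of_uniqueDiffOn
    (m := k) (by exact_mod_cast hk) hs ha
  rw [iteratedDerivWithin_eq_iteratedFDerivWithin, iteratedDeriv_eq_iteratedFDeriv, ← h2]
  rfl

private lemma rem_pos (f : ℝ → ℝ) (hf : ContDiff ℝ 5 f) (x : ℝ) :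
    ∃ C : ℝ, ∀ h ∈ Icc (0:ℝ) 1,
      |f (x + h) - (f x + deriv f x * h + iteratedDeriv 2 f x * h ^ 2 / 2
        + iteratedDeriv 3 f x * h ^ 3 / 6 + iteratedDeriv 4 f x * h ^ 4 / 24)| ≤ C * h ^ 5 := by
  have hle : x ≤ x + 1 := by linarith
  obtain ⟨C, hC⟩ := exists_taylor_mean_remainder_bound (f := f) (a := x) (b := x + 1) (n := 4)
    hle (by exact_mod_cast hf.contDiffOn)
  refine ⟨C, fun h hh => ?_⟩
  have h1 := hC (x + h) ⟨by linarith [hh.1], by linarith [hh.2]⟩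
  have hsum : taylorWithinEval f 4 (Icc x (x+1)) x (x+h)
      = f x + deriv f x * h + iteratedDeriv 2 f x * h ^ 2 / 2
        + iteratedDeriv 3 f x * h ^ 3 / 6 + iteratedDeriv 4 f x * h ^ 4 / 24 := by
    rw [taylor_within_apply]
    have e : ∀ k ∈ Finset.range 5,
        ((k.factorial : ℝ)⁻¹ * (x + h - x) ^ k) • iteratedDerivWithin k f (Icc x (x+1)) x
          = ((k.factorial : ℝ)⁻¹ * h ^ k) * iteratedDeriv k f x := by
      intro k hk
      rw [add_sub_cancel_left, iterWithin_eq f hf (uniqueDiffOn_Icc (by linarith))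
        (left_mem_Icc.mpr hle) (by have := Finset.mem_range.mp hk; omega), smul_eq_mul]
    rw [Finset.sum_congr rfl e]
    norm_num [Finset.sum_range_succ, Nat.factorial, iteratedDeriv_one]
    ring
  rw [hsum, add_sub_cancel_left, Real.norm_eq_abs] at h1
  norm_num at h1 ⊢
  exact h1

private lemma combo {l : Filter ℝ} {A B q ρ σ : ℝ → ℝ}
    (hA : A =O[l] fun _ => (1:ℝ)) (hB : B =O[l] fun _ => (1:ℝ)) (hq : q =O[l] fun _ => (1:ℝ))
    (hρ : ρ =O[l] fun h => h ^ 5) (hσ : σ =O[l] fun h => h ^ 5)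
    (h1 : (fun h : ℝ => h ^ 5) =O[l] fun _ => (1:ℝ)) :
    (fun h => (13/12) * (A h + ρ h) ^ 2 + (B h + σ h) ^ 2
      - ((13/12) * (A h) ^ 2 + (B h) ^ 2) + q h * h ^ 5) =O[l] fun h => h ^ 5 := by
  have hρ1 : ρ =O[l] fun _ => (1:ℝ) := hρ.trans h1
  have hσ1 : σ =O[l] fun _ => (1:ℝ) := hσ.trans h1
  have t1 : (fun h => A h * ρ h) =O[l] fun h => h ^ 5 := by simpa using hA.mul hρ
  have t2 : (fun h => ρ h * ρ h) =O[l] fun h => h ^ 5 := by simpa using hρ.mul hρ1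
  have t3 : (fun h => B h * σ h) =O[l] fun h => h ^ 5 := by simpa using hB.mul hσ
  have t4 : (fun h => σ h * σ h) =O[l] fun h => h ^ 5 := by simpa using hσ.mul hσ1
  have t5 : (fun h : ℝ => q h * h ^ 5) =O[l] fun h => h ^ 5 := by
    simpa using hq.mul (isBigO_refl (fun h : ℝ => h ^ 5) l)
  have e : (fun h => (13/12) * (A h + ρ h) ^ 2 + (B h + σ h) ^ 2
      - ((13/12) * (A h) ^ 2 + (B h) ^ 2) + q h * h ^ 5)
      = fun h => ((13/6) * (A h * ρ h) + (13/12) * (ρ h * ρ h))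
        + (2 * (B h * σ h) + σ h * σ h) + q h * h ^ 5 := by
    funext h; ring
  rw [e]
  exact (((t1.const_mul_left _).add (t2.const_mul_left _)).add
    ((t3.const_mul_left _).add t4)).add t5

private lemma polyO {q : ℝ → ℝ} (hq : Continuous q) :
    q =O[𝓝[>](0:ℝ)] fun _ => (1:ℝ) :=
  ((hq.tendsto 0).mono_left nhdsWithin_le_nhds).isBigO_one ℝ

private lemma hgk_neg (f : ℝ → ℝ) (x : ℝ) (k : ℕ) :
    iteratedDeriv k (fun y => f (2*x - y)) x = (-1)^k * iteratedDeriv k f x := by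
  have e1 : (fun y => f (2*x - y)) = fun y => (fun z => f (2*x + z)) (-y) := by
    funext y; rw [sub_eq_add_neg]
  have h2 := iteratedDeriv_comp_neg k (fun z => f (2*x + z)) x
  have h3 := congrFun (iteratedDeriv_comp_const_add k f (2*x)) (-x)
  rw [e1, h2, h3, show 2*x + -x = x by ring, smul_eq_mul]

end helpers

theorem central_beta1_beta2_taylor (f : ℝ → ℝ) (hf : ContDiff ℝ 5 f) (x : ℝ) :
    ((fun Δx : ℝ =>
        ((13/12) * (f (x - Δx) - 2 * f x + f (x + Δx)) ^ 2
          + (f (x + Δx) - f x) ^ 2)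
        - ((deriv f x) ^ 2 * Δx ^ 2 + deriv f x * iteratedDeriv 2 f x * Δx ^ 3
          + ((4/3) * (iteratedDeriv 2 f x) ^ 2
              + (1/3) * deriv f x * iteratedDeriv 3 f x) * Δx ^ 4))
      =O[𝓝[>] (0 : ℝ)] fun Δx => Δx ^ 5)
    ∧
    ((fun Δx : ℝ =>
        ((13/12) * (f x - 2 * f (x + Δx) + f (x + 2 * Δx)) ^ 2
          + (f x - f (x + Δx)) ^ 2)
        - ((deriv f x) ^ 2 * Δx ^ 2 + deriv f x * iteratedDeriv 2 f x * Δx ^ 3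
          + ((4/3) * (iteratedDeriv 2 f x) ^ 2
              + (1/3) * deriv f x * iteratedDeriv 3 f x) * Δx ^ 4))
      =O[𝓝[>] (0 : ℝ)] fun Δx => Δx ^ 5) := by
  simp only [← iteratedDeriv_one]
  have mem1 : Set.Ioo (0:ℝ) 1 ∈ 𝓝[>] (0:ℝ) := Ioo_mem_nhdsGT one_pos
  have memhalf : Set.Ioo (0:ℝ) (1/2) ∈ 𝓝[>] (0:ℝ) :=
    Ioo_mem_nhdsGT (by norm_num : (0:ℝ) < 1/2)
  obtain ⟨C, hC⟩ := rem_pos f hf x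
  simp only [← iteratedDeriv_one] at hC
  -- remainder for f (x + h)
  have hr1 : (fun h => f (x + h) - (f x + iteratedDeriv 1 f x * h
      + iteratedDeriv 2 f x * h ^ 2 / 2 + iteratedDeriv 3 f x * h ^ 3 / 6
      + iteratedDeriv 4 f x * h ^ 4 / 24)) =O[𝓝[>] (0:ℝ)] fun h => h ^ 5 := by
    refine isBigO_iff.mpr ⟨C, ?_⟩
    filter_upwards [mem1] with h hh
    rw [Real.norm_eq_abs, Real.norm_eq_abs, abs_of_pos (pow_pos hh.1 5)]
    exact hC h ⟨hh.1.le, hh.2.le⟩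
  -- remainder for f (x + 2h)
  have hr2 : (fun h => f (x + 2*h) - (f x + iteratedDeriv 1 f x * (2*h)
      + iteratedDeriv 2 f x * (2*h) ^ 2 / 2 + iteratedDeriv 3 f x * (2*h) ^ 3 / 6
      + iteratedDeriv 4 f x * (2*h) ^ 4 / 24)) =O[𝓝[>] (0:ℝ)] fun h => h ^ 5 := by
    refine isBigO_iff.mpr ⟨32*C, ?_⟩
    filter_upwards [memhalf] with h hh
    rw [Real.norm_eq_abs, Real.norm_eq_abs, abs_of_pos (pow_pos hh.1 5)]
    refine le_trans (hC (2*h) ⟨by linarith [hh.1], by linarith [hh.2]⟩) (le_of_eq (by ring))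
  -- remainder for f (x - h)
  have hg : ContDiff ℝ 5 (fun y => f (2*x - y)) := hf.comp (contDiff_const.sub contDiff_id)
  obtain ⟨Cm, hCm⟩ := rem_pos (fun y => f (2*x - y)) hg x
  simp only [← iteratedDeriv_one] at hCm
  have hrm : (fun h => f (x - h) - (f x - iteratedDeriv 1 f x * h
      + iteratedDeriv 2 f x * h ^ 2 / 2 - iteratedDeriv 3 f x * h ^ 3 / 6
      + iteratedDeriv 4 f x * h ^ 4 / 24)) =O[𝓝[>] (0:ℝ)] fun h => h ^ 5 := by
    refine isBigO_iff.mpr ⟨Cm, ?_⟩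
    filter_upwards [mem1] with h hh
    have hb := hCm h ⟨hh.1.le, hh.2.le⟩
    try dsimp only at hb
    rw [show 2*x - (x + h) = x - h by ring, show 2*x - x = x by ring,
      hgk_neg f x 1, hgk_neg f x 2, hgk_neg f x 3, hgk_neg f x 4] at hb
    rw [Real.norm_eq_abs, Real.norm_eq_abs, abs_of_pos (pow_pos hh.1 5)]
    refine le_trans (le_of_eq ?_) hb
    congr 1
    ring
  have H51 : (fun h : ℝ => h ^ 5) =O[𝓝[>] (0:ℝ)] fun _ => (1:ℝ) := polyO (by fun_prop)
  constructor
  · have HA : (fun h : ℝ => iteratedDeriv 2 f x * h ^ 2 + iteratedDeriv 4 f x * h ^ 4 / 12)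
        =O[𝓝[>] (0:ℝ)] fun _ => (1:ℝ) := polyO (by fun_prop)
    have HB : (fun h : ℝ => iteratedDeriv 1 f x * h + iteratedDeriv 2 f x * h ^ 2 / 2
        + iteratedDeriv 3 f x * h ^ 3 / 6 + iteratedDeriv 4 f x * h ^ 4 / 24)
        =O[𝓝[>] (0:ℝ)] fun _ => (1:ℝ) := polyO (by fun_prop)
    have Hq : (fun h : ℝ => (1/12) * iteratedDeriv 1 f x * iteratedDeriv 4 f x
        + (1/6) * iteratedDeriv 2 f x * iteratedDeriv 3 f x
        + ((2/9) * iteratedDeriv 2 f x * iteratedDeriv 4 f x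
          + (1/36) * iteratedDeriv 3 f x ^ 2) * h
        + (1/72) * iteratedDeriv 3 f x * iteratedDeriv 4 f x * h ^ 2
        + (1/108) * iteratedDeriv 4 f x ^ 2 * h ^ 3)
        =O[𝓝[>] (0:ℝ)] fun _ => (1:ℝ) := polyO (by fun_prop)
    have K := combo HA HB Hq (hrm.add hr1) hr1 H51
    exact K.congr' (Eventually.of_forall fun h => by dsimp only; ring) EventuallyEq.rfl
  · have HA : (fun h : ℝ => iteratedDeriv 2 f x * h ^ 2 + iteratedDeriv 3 f x * h ^ 3
        + (7/12) * iteratedDeriv 4 f x * h ^ 4)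
        =O[𝓝[>] (0:ℝ)] fun _ => (1:ℝ) := polyO (by fun_prop)
    have HB : (fun h : ℝ => -(iteratedDeriv 1 f x * h + iteratedDeriv 2 f x * h ^ 2 / 2
        + iteratedDeriv 3 f x * h ^ 3 / 6 + iteratedDeriv 4 f x * h ^ 4 / 24))
        =O[𝓝[>] (0:ℝ)] fun _ => (1:ℝ) := polyO (by fun_prop)
    have Hq : (fun h : ℝ => (7/3) * iteratedDeriv 2 f x * iteratedDeriv 3 f x
        + (1/12) * iteratedDeriv 1 f x * iteratedDeriv 4 f x
        + ((47/36) * iteratedDeriv 2 f x * iteratedDeriv 4 f x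
          + (10/9) * iteratedDeriv 3 f x ^ 2) * h
        + (23/18) * iteratedDeriv 3 f x * iteratedDeriv 4 f x * h ^ 2
        + (10/27) * iteratedDeriv 4 f x ^ 2 * h ^ 3)
        =O[𝓝[>] (0:ℝ)] fun _ => (1:ℝ) := polyO (by fun_prop)
    have K := combo HA HB Hq (hr2.sub (hr1.const_mul_left 2)) hr1.neg_left H51
    exact K.congr' (Eventually.of_forall fun h => by dsimp only; ring) EventuallyEq.rfl
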